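/- arXiv:math-ph/0409012 — 3 statements merged into one kernel-verified Lean document; each statement's English description precedes it below -/
import Mathlib

section
/- Let I ⊆ ℝ be an open interval, let γ : I → ℝ² be a C¹ curve parametrized by arc length with unit tangent τ(s) = γ'(s), and let n : I → ℝ² be a differentiable map of unit vectors with τ(s) = (−n₂(s), n₁(s)) and n'(s) = κ(s) τ(s) for a function κ : I → ℝ. Let v : ℝ² → ℝ² be C¹ and suppose v(γ(s)) · n(s) = 0 for all s ∈ I. Then for all s ∈ I, (Dv(γ(s)) n(s)) · τ(s) = ω(v)(γ(s)) − κ(s) (v(γ(s)) · τ(s)). -/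
/-!
Differentiating the tangency condition `v(γ(s)) · n(s) = 0` along the curve gives
`(Dv τ) · n + κ (v · τ) = 0`. For any linear map `A` of `ℝ²` and `τ = Jn` the rotation of a unit
vector `n`, the antisymmetric combination `(A n) · τ − (A τ) · n` equals `A₁₀ − A₀₁`, which
for `A = Dv` is the vorticity.
-/

noncomputable section

/-- Dot product on `ℝ²` (realized as `Fin 2 → ℝ`). -/
def dot2 (u w : Fin 2 → ℝ) : ℝ := u 0 * w 0 + u 1 * w 1

/-- Vorticity `ω(v)(x) = ∂₁v²(x) − ∂₂v¹(x)` (components indexed `0,1`). -/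
def vort (v : (Fin 2 → ℝ) → Fin 2 → ℝ) (x : Fin 2 → ℝ) : ℝ :=
  fderiv ℝ v x (Pi.single 0 1) 1 - fderiv ℝ v x (Pi.single 1 1) 0

lemma dot2_smul_right (u w : Fin 2 → ℝ) (c : ℝ) : dot2 u (c • w) = c * dot2 u w := by
  simp only [dot2, Pi.smul_apply, smul_eq_mul]
  ring

lemma HasDerivAt.dot2 {f g : ℝ → Fin 2 → ℝ} {f' g' : Fin 2 → ℝ} {t : ℝ}
    (hf : HasDerivAt f f' t) (hg : HasDerivAt g g' t) :
    HasDerivAt (fun t => dot2 (f t) (g t)) (dot2 f' (g t) + dot2 (f t) g') t := by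
  have hfi := hasDerivAt_pi.mp hf
  have hgi := hasDerivAt_pi.mp hg
  simp only [_root_.dot2]
  exact (((hfi 0).mul (hgi 0)).add ((hfi 1).mul (hgi 1))).congr_deriv (by ring)

lemma dot2_apply_rot_sub_dot2_apply_rot (A : (Fin 2 → ℝ) →L[ℝ] Fin 2 → ℝ) (u : Fin 2 → ℝ) :
    dot2 (A u) ![-(u 1), u 0] - dot2 (A ![-(u 1), u 0]) u =
      (A (Pi.single 0 1) 1 - A (Pi.single 1 1) 0) * dot2 u u := by
  have hA : ∀ w, A w = w 0 • A (Pi.single 0 1) + w 1 • A (Pi.single 1 1) := by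
    intro w
    conv_lhs => rw [show w = w 0 • Pi.single 0 1 + w 1 • Pi.single 1 1 by
      funext i; fin_cases i <;> simp]
    rw [map_add, map_smul, map_smul]
  rw [hA u, hA ![-(u 1), u 0]]
  simp only [dot2, Pi.add_apply, Pi.smul_apply, smul_eq_mul, Matrix.cons_val_zero,
    Matrix.cons_val_one]
  ring

lemma dot2_fderiv_rot_sub_dot2_fderiv_rot (v : (Fin 2 → ℝ) → Fin 2 → ℝ) (x u : Fin 2 → ℝ) :
    dot2 (fderiv ℝ v x u) ![-(u 1), u 0] - dot2 (fderiv ℝ v x ![-(u 1), u 0]) u =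
      vort v x * dot2 u u :=
  dot2_apply_rot_sub_dot2_apply_rot (fderiv ℝ v x) u

lemma dot2_fderiv_tangent_normal_add_curvature_eq_zero {U : Set ℝ} (hU : IsOpen U)
    {γ τ n : ℝ → Fin 2 → ℝ} {κ : ℝ → ℝ} {v : (Fin 2 → ℝ) → Fin 2 → ℝ} {s : ℝ} (hs : s ∈ U)
    (hγ : HasDerivAt γ (τ s) s) (hn' : HasDerivAt n (κ s • τ s) s)
    (hv : DifferentiableAt ℝ v (γ s)) (htang : ∀ t ∈ U, dot2 (v (γ t)) (n t) = 0) :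
    dot2 (fderiv ℝ v (γ s) (τ s)) (n s) + κ s * dot2 (v (γ s)) (τ s) = 0 := by
  have hderiv := (hv.hasFDerivAt.comp_hasDerivAt s hγ).dot2 hn'
  have hzero : HasDerivAt (fun t => dot2 (v (γ t)) (n t)) 0 s :=
    (hasDerivAt_const s (0 : ℝ)).congr_of_eventuallyEq
      (Filter.eventually_of_mem (hU.mem_nhds hs) htang)
  rw [← dot2_smul_right]
  exact hderiv.unique hzero

theorem grad_n_dot_tau_general (a b : ℝ) (γ τ n : ℝ → Fin 2 → ℝ) (κ : ℝ → ℝ)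
    (v : (Fin 2 → ℝ) → Fin 2 → ℝ)
    (hγ : ∀ s ∈ Set.Ioo a b, HasDerivAt γ (τ s) s)
    (hnunit : ∀ s ∈ Set.Ioo a b, dot2 (n s) (n s) = 1)
    (hτdef : ∀ s ∈ Set.Ioo a b, τ s = ![-(n s 1), n s 0])
    (hn' : ∀ s ∈ Set.Ioo a b, HasDerivAt n (κ s • τ s) s)
    (hv : ContDiff ℝ 1 v)
    (htang : ∀ s ∈ Set.Ioo a b, dot2 (v (γ s)) (n s) = 0) :
    ∀ s ∈ Set.Ioo a b,
      dot2 (fderiv ℝ v (γ s) (n s)) (τ s) =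
        vort v (γ s) - κ s * dot2 (v (γ s)) (τ s) := by
  intro s hs
  have htang_deriv := dot2_fderiv_tangent_normal_add_curvature_eq_zero isOpen_Ioo hs (hγ s hs)
    (hn' s hs) (hv.differentiable one_ne_zero (γ s)) htang
  have hrot := dot2_fderiv_rot_sub_dot2_fderiv_rot v (γ s) (n s)
  rw [hnunit s hs, ← hτdef s hs] at hrot
  linear_combination hrot + htang_deriv

/-- Along a `C¹` arc-length curve `γ` in the open interval `(a,b)`, with unit normal `n`,
positively-oriented tangent `τ = (−n₂, n₁) = γ'` and `n' = κ τ`, if a `C¹` vector field `v`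
satisfies `v(γ(s)) ⬝ n(s) = 0`, then
`(Dv(γ(s)) n(s)) ⬝ τ(s) = ω(v)(γ(s)) − κ(s) (v(γ(s)) ⬝ τ(s))`. -/
theorem grad_n_dot_tau (a b : ℝ) (γ τ n : ℝ → Fin 2 → ℝ) (κ : ℝ → ℝ)
    (v : (Fin 2 → ℝ) → Fin 2 → ℝ)
    (hγ : ∀ s ∈ Set.Ioo a b, HasDerivAt γ (τ s) s)
    (hτcont : ContinuousOn τ (Set.Ioo a b))
    (hτunit : ∀ s ∈ Set.Ioo a b, dot2 (τ s) (τ s) = 1)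
    (hnunit : ∀ s ∈ Set.Ioo a b, dot2 (n s) (n s) = 1)
    (hτdef : ∀ s ∈ Set.Ioo a b, τ s = ![-(n s 1), n s 0])
    (hn' : ∀ s ∈ Set.Ioo a b, HasDerivAt n (κ s • τ s) s)
    (hv : ContDiff ℝ 1 v)
    (htang : ∀ s ∈ Set.Ioo a b, dot2 (v (γ s)) (n s) = 0) :
    ∀ s ∈ Set.Ioo a b,
      dot2 (fderiv ℝ v (γ s) (n s)) (τ s) =
        vort v (γ s) - κ s * dot2 (v (γ s)) (τ s) :=
  grad_n_dot_tau_general a b γ τ n κ v hγ hnunit hτdef hn' hv htang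

end
end

section
/- Let φ : (1, ∞) → [0, ∞) be continuous and M > 0. Then the function β_{M,φ} : [0, ∞) → [0, ∞) defined by β_{M,φ}(x) = inf{ M^ε x^{1−ε} φ(1/ε) : ε ∈ (0,1) } is continuous on [0, ∞). -/
/-!
Each `x ↦ M^ε x^(1-ε) φ(1/ε)` is a nonnegative multiple of a concave power on `[0, ∞)`, so their
infimum `β_{M,φ}` is concave there, hence continuous on `(0, ∞)`. At `0` it is squeezed:
`0 ≤ β_{M,φ}(x) ≤ M^{1/2} φ(2) √x`.
-/

noncomputable section

/-- `β_{M,φ}(x) = inf { M^ε x^(1−ε) φ(1/ε) : ε ∈ (0,1) }` (real powers). -/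
def yudovichBeta (M : ℝ) (φ : ℝ → ℝ) (x : ℝ) : ℝ :=
  sInf { y | ∃ ε ∈ Set.Ioo (0 : ℝ) 1, y = M ^ ε * x ^ (1 - ε) * φ (1 / ε) }

open Set Filter Topology

theorem ConcaveOn.csInf_of_bddBelow {E ι : Type*} [AddCommMonoid E] [Module ℝ E] {s : Set E}
    {I : Set ι} {g : ι → E → ℝ} (hs : Convex ℝ s) (hI : I.Nonempty)
    (hg : ∀ i ∈ I, ConcaveOn ℝ s (g i)) (hbdd : ∀ x ∈ s, BddBelow {y | ∃ i ∈ I, y = g i x}) :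
    ConcaveOn ℝ s fun x => sInf {y | ∃ i ∈ I, y = g i x} := by
  refine ⟨hs, fun x hx y hy a b ha hb hab => ?_⟩
  obtain ⟨i₀, hi₀⟩ := hI
  refine le_csInf ⟨_, i₀, hi₀, rfl⟩ ?_
  rintro _ ⟨i, hi, rfl⟩
  calc a • sInf {y | ∃ i ∈ I, y = g i x} + b • sInf {z | ∃ i ∈ I, z = g i y}
      ≤ a • g i x + b • g i y := by
        gcongr
        · exact csInf_le (hbdd x hx) ⟨i, hi, rfl⟩
        · exact csInf_le (hbdd y hy) ⟨i, hi, rfl⟩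
    _ ≤ g i (a • x + b • y) := (hg i hi).2 hx hy ha hb hab

section Yudovich

variable {M : ℝ} {φ : ℝ → ℝ}

lemma one_lt_one_div_of_mem_Ioo {ε : ℝ} (hε : ε ∈ Ioo (0 : ℝ) 1) : 1 < 1 / ε :=
  (one_lt_div hε.1).2 hε.2

lemma yudovich_coeff_nonneg (hM : 0 < M) (hφnn : ∀ p ∈ Ioi (1 : ℝ), 0 ≤ φ p) {ε : ℝ}
    (hε : ε ∈ Ioo (0 : ℝ) 1) : 0 ≤ M ^ ε * φ (1 / ε) :=
  mul_nonneg (Real.rpow_nonneg hM.le ε) (hφnn _ (one_lt_one_div_of_mem_Ioo hε))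

lemma concaveOn_yudovich_term (hM : 0 < M) (hφnn : ∀ p ∈ Ioi (1 : ℝ), 0 ≤ φ p) {ε : ℝ}
    (hε : ε ∈ Ioo (0 : ℝ) 1) :
    ConcaveOn ℝ (Ici 0) fun x : ℝ => M ^ ε * x ^ (1 - ε) * φ (1 / ε) := by
  have hpow := Real.concaveOn_rpow (p := 1 - ε) (by linarith [hε.2]) (by linarith [hε.1])
  refine (hpow.smul (yudovich_coeff_nonneg hM hφnn hε)).congr fun x _ => ?_
  simp only [smul_eq_mul]
  ring

lemma yudovich_term_nonneg (hM : 0 < M) (hφnn : ∀ p ∈ Ioi (1 : ℝ), 0 ≤ φ p) {x ε : ℝ}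
    (hx : 0 ≤ x) (hε : ε ∈ Ioo (0 : ℝ) 1) : 0 ≤ M ^ ε * x ^ (1 - ε) * φ (1 / ε) := by
  rw [mul_right_comm]
  exact mul_nonneg (yudovich_coeff_nonneg hM hφnn hε) (Real.rpow_nonneg hx _)

lemma bddBelow_yudovich_set (hM : 0 < M) (hφnn : ∀ p ∈ Ioi (1 : ℝ), 0 ≤ φ p) {x : ℝ}
    (hx : 0 ≤ x) : BddBelow {y | ∃ ε ∈ Ioo (0 : ℝ) 1, y = M ^ ε * x ^ (1 - ε) * φ (1 / ε)} :=
  ⟨0, by rintro _ ⟨ε, hε, rfl⟩; exact yudovich_term_nonneg hM hφnn hx hε⟩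

lemma yudovichBeta_nonneg (hM : 0 < M) (hφnn : ∀ p ∈ Ioi (1 : ℝ), 0 ≤ φ p) {x : ℝ}
    (hx : 0 ≤ x) : 0 ≤ yudovichBeta M φ x :=
  le_csInf ⟨_, 1 / 2, ⟨by norm_num, by norm_num⟩, rfl⟩ <| by
    rintro _ ⟨ε, hε, rfl⟩
    exact yudovich_term_nonneg hM hφnn hx hε

lemma yudovichBeta_le (hM : 0 < M) (hφnn : ∀ p ∈ Ioi (1 : ℝ), 0 ≤ φ p) {x ε : ℝ}
    (hx : 0 ≤ x) (hε : ε ∈ Ioo (0 : ℝ) 1) :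
    yudovichBeta M φ x ≤ M ^ ε * x ^ (1 - ε) * φ (1 / ε) :=
  csInf_le (bddBelow_yudovich_set hM hφnn hx) ⟨ε, hε, rfl⟩

lemma concaveOn_yudovichBeta (hM : 0 < M) (hφnn : ∀ p ∈ Ioi (1 : ℝ), 0 ≤ φ p) :
    ConcaveOn ℝ (Ici 0) (yudovichBeta M φ) :=
  ConcaveOn.csInf_of_bddBelow (convex_Ici 0) (nonempty_Ioo.2 zero_lt_one)
    (fun _ hε => concaveOn_yudovich_term hM hφnn hε)
    (fun _ hx => bddBelow_yudovich_set hM hφnn hx)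

lemma yudovichBeta_continuousWithinAt_zero (hM : 0 < M)
    (hφnn : ∀ p ∈ Ioi (1 : ℝ), 0 ≤ φ p) :
    ContinuousWithinAt (yudovichBeta M φ) (Ici 0) 0 := by
  have hhalf : (1 / 2 : ℝ) ∈ Ioo 0 1 := ⟨by norm_num, by norm_num⟩
  set u : ℝ → ℝ := fun x => M ^ (1 / 2 : ℝ) * x ^ (1 - 1 / 2 : ℝ) * φ (1 / (1 / 2))
  have hu_cont : Continuous u :=
    (continuous_const.mul (Real.continuous_rpow_const (by norm_num))).mul continuous_const
  have hu_zero : u 0 = 0 := by norm_num [u]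
  have hu : Tendsto u (𝓝[≥] 0) (𝓝 (u 0)) := hu_cont.continuousWithinAt
  rw [hu_zero] at hu
  have hβ_zero : yudovichBeta M φ 0 = 0 :=
    le_antisymm ((yudovichBeta_le hM hφnn le_rfl hhalf).trans_eq hu_zero)
      (yudovichBeta_nonneg hM hφnn le_rfl)
  rw [ContinuousWithinAt, hβ_zero]
  refine tendsto_of_tendsto_of_tendsto_of_le_of_le' tendsto_const_nhds hu ?_ ?_
  · exact eventually_nhdsWithin_of_forall fun _ hx => yudovichBeta_nonneg hM hφnn hx
  · exact eventually_nhdsWithin_of_forall fun _ hx => yudovichBeta_le hM hφnn hx hhalf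

end Yudovich

theorem yudovichBeta_continuous_general (M : ℝ) (hM : 0 < M) (φ : ℝ → ℝ)
    (hφnn : ∀ p ∈ Set.Ioi (1 : ℝ), 0 ≤ φ p) :
    ContinuousOn (yudovichBeta M φ) (Set.Ici 0) :=
  (concaveOn_yudovichBeta hM hφnn).continuousOn_Ici
    (yudovichBeta_continuousWithinAt_zero hM hφnn)

/-- For `φ : (1,∞) → [0,∞)` continuous and `M > 0`, `β_{M,φ}` is continuous on `[0,∞)`. -/
theorem yudovichBeta_continuous (M : ℝ) (hM : 0 < M) (φ : ℝ → ℝ)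
    (hφc : ContinuousOn φ (Set.Ioi 1))
    (hφnn : ∀ p ∈ Set.Ioi (1 : ℝ), 0 ≤ φ p) :
    ContinuousOn (yudovichBeta M φ) (Set.Ici 0) :=
  yudovichBeta_continuous_general M hM φ hφnn

end
end

section
/- Let φ : (1, ∞) → (0, ∞) be continuous and let M, M' > 0. Then ∫₀¹ ds / β_{M,φ}(s) = ∞ if and only if ∫₀¹ ds / β_{M',φ}(s) = ∞, where β_{M,φ}(x) = inf{ M^ε x^{1−ε} φ(1/ε) : ε ∈ (0,1) } and the integral is the improper integral lim_{a→0⁺} ∫_a¹ ds / β_{M,φ}(s). In other words, the admissibility condition ∫₀¹ ds / β_{M,φ}(s) = ∞ is independent of the choice of M. -/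
noncomputable section

open Set Filter MeasureTheory Real

namespace YudoAux

variable {M M' : ℝ} {φ : ℝ → ℝ} {x : ℝ}

lemma set_nonempty (M : ℝ) (φ : ℝ → ℝ) (x : ℝ) :
    { y | ∃ ε ∈ Set.Ioo (0 : ℝ) 1, y = M ^ ε * x ^ (1 - ε) * φ (1 / ε) }.Nonempty :=
  ⟨M ^ (1/2 : ℝ) * x ^ (1 - (1/2 : ℝ)) * φ (1 / (1/2 : ℝ)), (1/2 : ℝ),
    ⟨by norm_num, by norm_num⟩, rfl⟩

lemma elem_nonneg (hM : 0 < M) (hφpos : ∀ p ∈ Set.Ioi (1 : ℝ), 0 < φ p) (hx : 0 ≤ x)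
    {ε : ℝ} (hε : ε ∈ Set.Ioo (0 : ℝ) 1) :
    0 ≤ M ^ ε * x ^ (1 - ε) * φ (1 / ε) := by
  have h1 : (0:ℝ) < M ^ ε := Real.rpow_pos_of_pos hM ε
  have h2 : (0:ℝ) ≤ x ^ (1 - ε) := Real.rpow_nonneg hx _
  have h3 : (0:ℝ) < φ (1 / ε) := hφpos _ (one_lt_one_div hε.1 hε.2)
  positivity

lemma set_bddBelow (hM : 0 < M) (hφpos : ∀ p ∈ Set.Ioi (1 : ℝ), 0 < φ p) (hx : 0 ≤ x) :
    BddBelow { y | ∃ ε ∈ Set.Ioo (0 : ℝ) 1, y = M ^ ε * x ^ (1 - ε) * φ (1 / ε) } := by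
  refine ⟨0, ?_⟩
  rintro y ⟨ε, hε, rfl⟩
  exact elem_nonneg hM hφpos hx hε

lemma beta_nonneg (hM : 0 < M) (hφpos : ∀ p ∈ Set.Ioi (1 : ℝ), 0 < φ p) (hx : 0 ≤ x) :
    0 ≤ yudovichBeta M φ x := by
  apply Real.sInf_nonneg
  rintro y ⟨ε, hε, rfl⟩
  exact elem_nonneg hM hφpos hx hε

lemma rpow_ratio_le (hM : 0 < M) (hM' : 0 < M') {ε : ℝ} (hε : ε ∈ Set.Ioo (0 : ℝ) 1) :
    (M' / M) ^ ε ≤ max (M' / M) 1 := by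
  rcases le_or_gt M' M with h | h
  · have : (M' / M) ^ ε ≤ 1 :=
      Real.rpow_le_one (div_nonneg hM'.le hM.le) ((div_le_one hM).mpr h) hε.1.le
    exact this.trans (le_max_right _ _)
  · have hb : 1 ≤ M' / M := (one_le_div hM).mpr h.le
    have := Real.rpow_le_rpow_of_exponent_le hb hε.2.le
    rw [Real.rpow_one] at this
    exact this.trans (le_max_left _ _)

lemma beta_le_mul (hM : 0 < M) (hM' : 0 < M') (hφpos : ∀ p ∈ Set.Ioi (1 : ℝ), 0 < φ p)
    (hx : 0 ≤ x) :
    yudovichBeta M' φ x ≤ max (M' / M) 1 * yudovichBeta M φ x := by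
  set C := max (M' / M) 1 with hCdef
  have hC : (0:ℝ) < C := lt_max_of_lt_right one_pos
  have key : yudovichBeta M' φ x / C ≤ yudovichBeta M φ x := by
    apply le_csInf (set_nonempty M φ x)
    rintro y ⟨ε, hε, rfl⟩
    rw [div_le_iff₀ hC]
    have h1 : yudovichBeta M' φ x ≤ M' ^ ε * x ^ (1 - ε) * φ (1 / ε) :=
      csInf_le (set_bddBelow hM' hφpos hx) ⟨ε, hε, rfl⟩
    refine h1.trans ?_
    have h2 : M' ^ ε ≤ C * M ^ ε := by
      have hsplit : M' ^ ε = (M' / M) ^ ε * M ^ ε := by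
        rw [← Real.mul_rpow (div_nonneg hM'.le hM.le) hM.le, div_mul_cancel₀ _ hM.ne']
      rw [hsplit]
      exact mul_le_mul_of_nonneg_right (rpow_ratio_le hM hM' hε)
        (Real.rpow_nonneg hM.le ε)
    have h3 : (0:ℝ) ≤ x ^ (1 - ε) := Real.rpow_nonneg hx _
    have h4 : (0:ℝ) ≤ φ (1 / ε) := (hφpos _ (one_lt_one_div hε.1 hε.2)).le
    calc M' ^ ε * x ^ (1 - ε) * φ (1 / ε)
        ≤ (C * M ^ ε) * x ^ (1 - ε) * φ (1 / ε) := by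
          exact mul_le_mul_of_nonneg_right (mul_le_mul_of_nonneg_right h2 h3) h4
      _ = M ^ ε * x ^ (1 - ε) * φ (1 / ε) * C := by ring
  calc yudovichBeta M' φ x = yudovichBeta M' φ x / C * C := by field_simp
    _ ≤ yudovichBeta M φ x * C := mul_le_mul_of_nonneg_right key hC.le
    _ = C * yudovichBeta M φ x := mul_comm _ _

lemma one_div_beta_le (hM : 0 < M) (hM' : 0 < M')
    (hφpos : ∀ p ∈ Set.Ioi (1 : ℝ), 0 < φ p) (hx : 0 < x) :
    1 / yudovichBeta M φ x ≤ max (M' / M) 1 * (1 / yudovichBeta M' φ x) := by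
  set C := max (M' / M) 1 with hCdef
  have hC : (0:ℝ) < C := lt_max_of_lt_right one_pos
  have h1 : yudovichBeta M' φ x ≤ C * yudovichBeta M φ x := beta_le_mul hM hM' hφpos hx.le
  have h2 : yudovichBeta M φ x ≤ max (M / M') 1 * yudovichBeta M' φ x :=
    beta_le_mul hM' hM hφpos hx.le
  rcases eq_or_lt_of_le (beta_nonneg hM' hφpos hx.le) with hz | hpos
  · have hz' : yudovichBeta M φ x = 0 := by
      rw [← hz, mul_zero] at h2
      exact le_antisymm h2 (beta_nonneg hM hφpos hx.le)
    rw [hz', ← hz]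
    simp
  · have hposM : 0 < yudovichBeta M φ x := by
      by_contra hle
      push_neg at hle
      have : yudovichBeta M φ x = 0 := le_antisymm hle (beta_nonneg hM hφpos hx.le)
      rw [this, mul_zero] at h1
      exact absurd h1 (not_le.mpr hpos)
    rw [mul_one_div, div_le_div_iff₀ hposM hpos, one_mul]
    linarith
  
lemma measurable_betaP (hM : 0 < M) (hφpos : ∀ p ∈ Set.Ioi (1 : ℝ), 0 < φ p) :
    Measurable (fun x : ℝ => yudovichBeta M φ (max x 0)) := by
  apply measurable_of_Iio
  intro c
  have hset : (fun x : ℝ => yudovichBeta M φ (max x 0)) ⁻¹' Iio c =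
      ⋃ ε ∈ Set.Ioo (0:ℝ) 1, {x : ℝ | M ^ ε * (max x 0) ^ (1 - ε) * φ (1 / ε) < c} := by
    ext x
    simp only [mem_preimage, mem_Iio, mem_iUnion, mem_setOf_eq, exists_prop, yudovichBeta]
    constructor
    · intro h
      obtain ⟨y, ⟨ε, hε, rfl⟩, hy⟩ :=
        (csInf_lt_iff (set_bddBelow hM hφpos (le_max_right x 0)) (set_nonempty M φ _)).1 h
      exact ⟨ε, hε, hy⟩
    · rintro ⟨ε, hε, h⟩
      exact lt_of_le_of_lt
        (csInf_le (set_bddBelow hM hφpos (le_max_right x 0)) ⟨ε, hε, rfl⟩) h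
  rw [hset]
  have hopen : IsOpen (⋃ ε ∈ Set.Ioo (0:ℝ) 1,
      {x : ℝ | M ^ ε * (max x 0) ^ (1 - ε) * φ (1 / ε) < c}) := by
    refine isOpen_iUnion fun ε => isOpen_iUnion fun hε => ?_
    have hcont : Continuous fun x : ℝ => M ^ ε * (max x 0) ^ (1 - ε) * φ (1 / ε) := by
      refine (continuous_const.mul ?_).mul continuous_const
      exact (continuous_id.max continuous_const).rpow_const fun x => Or.inr (by linarith [hε.2])
    exact isOpen_lt hcont continuous_const
  exact hopen.measurableSet

lemma aesm (hM : 0 < M) (hφpos : ∀ p ∈ Set.Ioi (1 : ℝ), 0 < φ p) {a : ℝ} (ha : 0 < a) :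
    AEStronglyMeasurable (fun s => 1 / yudovichBeta M φ s)
      (volume.restrict (Set.Ioc a 1)) := by
  have hm : Measurable fun x : ℝ => 1 / yudovichBeta M φ (max x 0) := by
    simp only [one_div]
    exact (measurable_betaP hM hφpos).inv
  refine hm.aestronglyMeasurable.congr ?_
  filter_upwards [self_mem_ae_restrict (measurableSet_Ioc : MeasurableSet (Set.Ioc a 1))]
    with s hs
  rw [max_eq_left (le_of_lt (ha.trans hs.1))]

lemma integrable_transfer (hM : 0 < M) (hM' : 0 < M')
    (hφpos : ∀ p ∈ Set.Ioi (1 : ℝ), 0 < φ p) {a : ℝ} (ha : 0 < a) (ha1 : a ≤ 1)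
    (h : IntervalIntegrable (fun s => 1 / yudovichBeta M' φ s) volume a 1) :
    IntervalIntegrable (fun s => 1 / yudovichBeta M φ s) volume a 1 := by
  rw [intervalIntegrable_iff_integrableOn_Ioc_of_le ha1] at h ⊢
  set C := max (M' / M) 1 with hCdef
  refine Integrable.mono' (h.const_mul C) (aesm hM hφpos ha) ?_
  filter_upwards [self_mem_ae_restrict (measurableSet_Ioc : MeasurableSet (Set.Ioc a 1))]
    with s hs
  have hspos : 0 < s := ha.trans hs.1
  have hnn : 0 ≤ 1 / yudovichBeta M φ s :=
    one_div_nonneg.mpr (beta_nonneg hM hφpos hspos.le)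
  rw [Real.norm_eq_abs, abs_of_nonneg hnn]
  exact one_div_beta_le hM hM' hφpos hspos

lemma key (hM : 0 < M) (hM' : 0 < M') (hφpos : ∀ p ∈ Set.Ioi (1 : ℝ), 0 < φ p)
    (h : Filter.Tendsto (fun a => ∫ s in a..1, 1 / yudovichBeta M φ s)
        (nhdsWithin 0 (Set.Ioi 0)) Filter.atTop) :
    Filter.Tendsto (fun a => ∫ s in a..1, 1 / yudovichBeta M' φ s)
        (nhdsWithin 0 (Set.Ioi 0)) Filter.atTop := by
  set C := max (M' / M) 1 with hCdef
  have hC : (0:ℝ) < C := lt_max_of_lt_right one_pos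
  by_cases hint : ∀ a ∈ Set.Ioo (0:ℝ) 1,
      IntervalIntegrable (fun s => 1 / yudovichBeta M' φ s) volume a 1
  · refine tendsto_atTop_mono' _ ?_ (h.const_mul_atTop (show (0:ℝ) < C⁻¹ by positivity))
    filter_upwards [Ioo_mem_nhdsGT_of_mem (show (0:ℝ) ∈ Set.Ico (0:ℝ) 1 by norm_num)]
      with a ha
    have hint' := hint a ha
    by_cases hiM : IntervalIntegrable (fun s => 1 / yudovichBeta M φ s) volume a 1
    · have hmono : (∫ s in a..1, 1 / yudovichBeta M φ s) ≤
          ∫ s in a..1, C * (1 / yudovichBeta M' φ s) := by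
        refine intervalIntegral.integral_mono_on ha.2.le hiM (hint'.const_mul C) ?_
        intro s hs
        exact one_div_beta_le hM hM' hφpos (lt_of_lt_of_le ha.1 hs.1)
      rw [intervalIntegral.integral_const_mul] at hmono
      rw [inv_mul_le_iff₀ hC]
      exact hmono
    · rw [intervalIntegral.integral_undef hiM, mul_zero]
      refine intervalIntegral.integral_nonneg ha.2.le fun u hu => ?_
      exact one_div_nonneg.mpr (beta_nonneg hM' hφpos (le_of_lt (lt_of_lt_of_le ha.1 hu.1)))
  · exfalso
    push_neg at hint
    obtain ⟨a₀, ha₀, hni'⟩ := hint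
    have hniM : ¬ IntervalIntegrable (fun s => 1 / yudovichBeta M φ s) volume a₀ 1 :=
      fun hi => hni' (integrable_transfer hM' hM hφpos ha₀.1 ha₀.2.le hi)
    have hev1 : ∀ᶠ a in nhdsWithin (0:ℝ) (Set.Ioi 0),
        (1:ℝ) ≤ ∫ s in a..1, 1 / yudovichBeta M φ s := h.eventually_ge_atTop 1
    have hev2 : ∀ᶠ a in nhdsWithin (0:ℝ) (Set.Ioi 0), a ∈ Set.Ioo (0:ℝ) a₀ :=
      Ioo_mem_nhdsGT_of_mem (Set.mem_Ico.mpr ⟨le_refl 0, ha₀.1⟩)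
    obtain ⟨a, h1, h2⟩ := (hev1.and hev2).exists
    have hni : ¬ IntervalIntegrable (fun s => 1 / yudovichBeta M φ s) volume a 1 := by
      intro hi
      exact hniM (hi.mono_set (Set.uIcc_subset_uIcc
        (Set.mem_uIcc.mpr (Or.inl ⟨h2.2.le, ha₀.2.le⟩))
        (Set.mem_uIcc.mpr (Or.inl ⟨(h2.2.trans ha₀.2).le, le_refl 1⟩))))
    rw [intervalIntegral.integral_undef hni] at h1
    linarith

end YudoAux

/-- For `φ : (1,∞) → (0,∞)` continuous and `M, M' > 0`, the admissibility condition
`∫₀¹ ds / β_{M,φ}(s) = ∞` (improper integral at `0`) is independent of the choice of `M`. -/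
theorem admissibility_independent_of_M (M M' : ℝ) (hM : 0 < M) (hM' : 0 < M') (φ : ℝ → ℝ)
    (hφc : ContinuousOn φ (Set.Ioi 1))
    (hφpos : ∀ p ∈ Set.Ioi (1 : ℝ), 0 < φ p) :
    (Filter.Tendsto (fun a => ∫ s in a..1, 1 / yudovichBeta M φ s)
        (nhdsWithin 0 (Set.Ioi 0)) Filter.atTop ↔
      Filter.Tendsto (fun a => ∫ s in a..1, 1 / yudovichBeta M' φ s)
        (nhdsWithin 0 (Set.Ioi 0)) Filter.atTop) :=
  ⟨fun h => YudoAux.key hM hM' hφpos h, fun h => YudoAux.key hM' hM hφpos h⟩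

end
end
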